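/- Let (Γ, T, n⊥, n, κ_g, τ_g) be a closed asymptotic curve in ℝ³ and u a unit vector with u × T(t) ≠ 0 for all t; set u⊥(t) := (u × T(t))/|u × T(t)|, and let θ : ℝ → ℝ be a C¹ function with u⊥(t) = cos(θ(t))·n⊥(t) + sin(θ(t))·n(t) for all t. Let ε = 1 if τ_g > 0 everywhere and ε = −1 if τ_g < 0 everywhere (τ_g has constant sign since it is continuous, periodic, and nowhere zero). Then the set Z := {t ∈ [0, 2π) : ⟨u, n(t)⟩ = 0} is finite and θ(2π) − θ(0) = −ε·π·(card Z). (Rotation formula Rot(u⊥, n) = −½·#{⟨u,n⟩ = 0}·sign(τ_g), the key step in the proof of Theorem 1.2.) -/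

import Mathlib

open Real intervalIntegral

noncomputable section

/-- The cross product on `EuclideanSpace ℝ (Fin 3)`. -/
def cross3 (a b : EuclideanSpace ℝ (Fin 3)) : EuclideanSpace ℝ (Fin 3) :=
  (EuclideanSpace.equiv (Fin 3) ℝ).symm
    (crossProduct ((EuclideanSpace.equiv (Fin 3) ℝ) a) ((EuclideanSpace.equiv (Fin 3) ℝ) b))

/-! ### Auxiliary counting lemmas -/

open Set Filter

private def bnd (x : ℝ) : ℤ := ⌊(x - π/2)/π⌋

private lemma cosZero {x : ℝ} : cos x = 0 ↔ ∃ k : ℤ, x = π/2 + k * π := by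
  rw [cos_eq_zero_iff]
  constructor <;> rintro ⟨k, hk⟩ <;> exact ⟨k, by linarith⟩

private lemma bnd_eq {x : ℝ} {k : ℤ} (h1 : π/2 + k*π ≤ x) (h2 : x < π/2 + (k+1)*π) :
    bnd x = k := by
  unfold bnd
  rw [Int.floor_eq_iff]
  constructor
  · rw [le_div_iff₀ pi_pos]; linarith
  · rw [div_lt_iff₀ pi_pos]; push_cast; linarith

private lemma bnd_lvl {k : ℤ} : bnd (π/2 + k*π) = k :=
  bnd_eq le_rfl (by nlinarith [pi_pos])

private lemma bnd_mem (x : ℝ) (hx : cos x ≠ 0) :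
    π/2 + (bnd x)*π < x ∧ x < π/2 + ((bnd x : ℝ) + 1)*π := by
  have h1 : ((bnd x : ℝ)) ≤ (x - π/2)/π := Int.floor_le _
  have h2 : (x - π/2)/π < bnd x + 1 := Int.lt_floor_add_one _
  rw [le_div_iff₀ pi_pos] at h1
  rw [div_lt_iff₀ pi_pos] at h2
  refine ⟨lt_of_le_of_ne (by linarith) ?_, by linarith⟩
  intro h
  exact hx (cosZero.2 ⟨bnd x, h.symm⟩)

/-- band constancy on an interval with no zeros of cos∘h -/
private lemma bandConstIcc {h : ℝ → ℝ} (hc : Continuous h) {a b : ℝ} (hab : a ≤ b)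
    (hno : ∀ t ∈ Icc a b, cos (h t) ≠ 0) : bnd (h a) = bnd (h b) := by
  have ha := bnd_mem (h a) (hno a ⟨le_rfl, hab⟩)
  set k := bnd (h a) with hk
  have hb1 : π/2 + k*π < h b := by
    by_contra hle
    push_neg at hle
    obtain ⟨t, ht, h3⟩ := intermediate_value_Icc' hab hc.continuousOn
      (⟨hle, ha.1.le⟩ : π/2 + (k:ℝ)*π ∈ Icc (h b) (h a))
    exact hno t ht (by rw [h3]; exact cosZero.2 ⟨k, rfl⟩)
  have hb2 : h b < π/2 + ((k:ℝ)+1)*π := by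
    by_contra hle
    push_neg at hle
    obtain ⟨t, ht, h3⟩ := intermediate_value_Icc hab hc.continuousOn
      (⟨by linarith [ha.2], hle⟩ : π/2 + ((k:ℝ)+1)*π ∈ Icc (h a) (h b))
    exact hno t ht (by rw [h3]; exact cosZero.2 ⟨k+1, by push_cast; ring⟩)
  exact (bnd_eq hb1.le (by push_cast; linarith)).symm

/-- local behavior at a strict downward crossing -/
private lemma crossing_local {h : ℝ → ℝ} (hc : Continuous h) {t₀ d : ℝ}
    (hd : HasDerivAt h d t₀) (hneg : d < 0) :
    ∃ δ > 0, (∀ t, t₀ < t → t < t₀ + δ → h t₀ - π < h t ∧ h t < h t₀) ∧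
             (∀ t, t₀ - δ < t → t < t₀ → h t₀ < h t ∧ h t < h t₀ + π) := by
  have hs : Tendsto (slope h t₀) (nhdsWithin t₀ {t₀}ᶜ) (nhds d) :=
    hasDerivAt_iff_tendsto_slope.1 hd
  have h1 : ∀ᶠ t in nhdsWithin t₀ {t₀}ᶜ, slope h t₀ t < 0 :=
    hs.eventually_lt_const hneg
  have h2 : ∀ᶠ t in nhds t₀, |h t - h t₀| < π := by
    have : Tendsto (fun t => |h t - h t₀|) (nhds t₀) (nhds 0) := by
      have h0 : Tendsto (fun t => h t - h t₀) (nhds t₀) (nhds 0) := by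
        simpa using (hc.tendsto t₀).sub (tendsto_const_nhds (x := h t₀))
      simpa using h0.abs
    exact this.eventually_lt_const pi_pos
  have h3 : ∀ᶠ t in nhdsWithin t₀ {t₀}ᶜ, slope h t₀ t < 0 ∧ |h t - h t₀| < π :=
    h1.and (eventually_nhdsWithin_of_eventually_nhds h2)
  rw [eventually_nhdsWithin_iff] at h3
  obtain ⟨δ, hδ, hball⟩ := Metric.eventually_nhds_iff.1 h3
  refine ⟨δ, hδ, ?_, ?_⟩
  · intro t ht1 ht2
    have hne : t ∈ ({t₀}ᶜ : Set ℝ) := by simp [ne_of_gt ht1]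
    have := hball (y := t) (by rw [Real.dist_eq, abs_lt]; constructor <;> linarith) hne
    have hsl : (h t - h t₀)/(t - t₀) < 0 := by
      have h4 := this.1
      rwa [slope_def_field] at h4
    have habs := this.2
    have hlt : h t < h t₀ := by
      by_contra hle
      push_neg at hle
      have : 0 ≤ (h t - h t₀)/(t - t₀) := div_nonneg (by linarith) (by linarith)
      linarith
    exact ⟨by cases abs_lt.1 habs; linarith, hlt⟩
  · intro t ht1 ht2
    have hne : t ∈ ({t₀}ᶜ : Set ℝ) := by simp [ne_of_lt ht2]
    have := hball (y := t) (by rw [Real.dist_eq, abs_lt]; constructor <;> linarith) hne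
    have hsl : (h t - h t₀)/(t - t₀) < 0 := by
      have h4 := this.1
      rwa [slope_def_field] at h4
    have habs := this.2
    have hgt : h t₀ < h t := by
      rcases lt_trichotomy (h t) (h t₀) with hl | he | hg
      · have : 0 < (h t - h t₀)/(t - t₀) := div_pos_of_neg_of_neg (by linarith) (by linarith)
        linarith
      · rw [he] at hsl; simp at hsl
      · exact hg
    exact ⟨hgt, by cases abs_lt.1 habs; linarith⟩

private lemma cos_sep {x y : ℝ} (hx : Real.cos x = 0) (hy : Real.cos y = 0) (hne : x ≠ y) :
    π ≤ |x - y| := by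
  rw [Real.cos_eq_zero_iff] at hx hy
  obtain ⟨k, hk⟩ := hx; obtain ⟨m, hm⟩ := hy
  have hxy : x - y = (k - m) * π := by rw [hk, hm]; push_cast; ring
  rw [hxy, abs_mul, abs_of_pos Real.pi_pos]
  have hkm : k ≠ m := by rintro rfl; exact hne (hk.trans hm.symm)
  have h1 : (1:ℝ) ≤ |(k:ℝ) - m| := by
    have : (1:ℝ) ≤ |((k - m : ℤ) : ℝ)| := by
      rw [← Int.cast_abs]
      exact_mod_cast Int.one_le_abs (sub_ne_zero.2 hkm)
    simpa using this
  nlinarith [Real.pi_pos, abs_nonneg ((k:ℝ) - m)]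

/-- isolation of crossings -/
private lemma crossing_isolated {h : ℝ → ℝ} (hc : Continuous h) {t₀ d : ℝ}
    (h0 : cos (h t₀) = 0) (hd : HasDerivAt h d t₀) (hneg : d < 0) :
    ∃ δ > 0, ∀ t, |t - t₀| < δ → t ≠ t₀ → cos (h t) ≠ 0 := by
  obtain ⟨δ, hδ, hr, hl⟩ := crossing_local hc hd hneg
  refine ⟨δ, hδ, fun t ht hne hcz => ?_⟩
  have hb : h t₀ - π < h t ∧ h t < h t₀ + π := by
    rcases lt_or_gt_of_ne hne with hlt | hgt
    · have := hl t (by cases abs_lt.1 ht; linarith) hlt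
      constructor <;> linarith [this.1, this.2, Real.pi_pos]
    · have := hr t hgt (by cases abs_lt.1 ht; linarith)
      constructor <;> linarith [this.1, this.2, Real.pi_pos]
  have hne' : h t ≠ h t₀ := by
    rcases lt_or_gt_of_ne hne with hlt | hgt
    · have := hl t (by cases abs_lt.1 ht; linarith) hlt
      exact ne_of_gt this.1
    · have := hr t hgt (by cases abs_lt.1 ht; linarith)
      exact ne_of_lt this.2
  have hsep := cos_sep hcz h0 hne'
  rcases abs_cases (h t - h t₀) with ⟨he, _⟩ | ⟨he, _⟩ <;> rw [he] at hsep <;>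
    linarith [hb.1, hb.2]

/-- finiteness of the crossing set -/
private lemma crossing_finite {h : ℝ → ℝ} (hc : Continuous h)
    (hd : ∀ t, cos (h t) = 0 → ∃ d, d < 0 ∧ HasDerivAt h d t) (A B : ℝ) :
    ({t ∈ Ico A B | cos (h t) = 0}).Finite := by
  have hsub : {t ∈ Ico A B | cos (h t) = 0} ⊆ {t ∈ Icc A B | cos (h t) = 0} :=
    fun t ⟨ht, hz⟩ => ⟨Ico_subset_Icc_self ht, hz⟩
  refine Set.Finite.subset ?_ hsub
  set C := {t ∈ Icc A B | cos (h t) = 0} with hC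
  have hclosed : IsClosed C := by
    have : C = Icc A B ∩ (fun t => cos (h t)) ⁻¹' {0} := by
      ext t; simp [hC]
    rw [this]
    exact isClosed_Icc.inter (IsClosed.preimage (Real.continuous_cos.comp hc) isClosed_singleton)
  have hcomp : IsCompact C := isCompact_Icc.of_isClosed_subset hclosed (fun t ht => ht.1)
  refine hcomp.finite ?_
  rw [isDiscrete_iff_discreteTopology, discreteTopology_subtype_iff]
  intro x hx
  obtain ⟨d, hdneg, hder⟩ := hd x hx.2
  obtain ⟨δ, hδ, hiso⟩ := crossing_isolated hc hx.2 hder hdneg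
  rw [Filter.inf_principal_eq_bot, Metric.mem_nhdsWithin_iff]
  refine ⟨δ, hδ, fun y hy => ?_⟩
  obtain ⟨hy1, hy2⟩ := hy
  intro hyC
  exact hiso y (by rw [← Real.dist_eq]; exact Metric.mem_ball.1 hy1) hy2 hyC.2

/-- band constancy on `Ico` (right endpoint may be a crossing) -/
private lemma bandConstIco {h : ℝ → ℝ} (hc : Continuous h)
    (hd : ∀ t, cos (h t) = 0 → ∃ d, d < 0 ∧ HasDerivAt h d t) {a b : ℝ} (hab : a ≤ b)
    (hno : ∀ t ∈ Ico a b, cos (h t) ≠ 0) : bnd (h a) = bnd (h b) := by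
  rcases eq_or_lt_of_le hab with rfl | hlt
  · rfl
  by_cases hb : cos (h b) = 0
  · obtain ⟨d, hdneg, hder⟩ := hd b hb
    obtain ⟨δ, hδ, _, hleft⟩ := crossing_local hc hder hdneg
    set b' := max a (b - δ/2) with hb'
    have hb'b : b' < b := max_lt hlt (by linarith)
    have hb'δ : b - δ < b' := lt_of_lt_of_le (by linarith) (le_max_right _ _)
    have hab' : a ≤ b' := le_max_left _ _
    have h1 : bnd (h a) = bnd (h b') :=
      bandConstIcc hc hab' (fun t ht => hno t ⟨ht.1, lt_of_le_of_lt ht.2 hb'b⟩)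
    obtain ⟨k, hk⟩ := cosZero.1 hb
    have hhb' := hleft b' hb'δ hb'b
    have h2 : bnd (h b') = k := by
      have e1 : π/2 + (k:ℝ)*π = h b := hk.symm
      have e2 : π/2 + ((k:ℝ)+1)*π = h b + π := by rw [hk]; ring
      exact bnd_eq (by linarith [hhb'.1]) (by push_cast; linarith [hhb'.2])
    rw [h1, h2, hk, bnd_lvl]
  · exact bandConstIcc hc hab (fun t ht => by
      rcases eq_or_lt_of_le ht.2 with rfl | hlt2
      · exact hb
      · exact hno t ⟨ht.1, hlt2⟩)

/-- main counting lemma -/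
private lemma countBnd {h : ℝ → ℝ} (hc : Continuous h)
    (hd : ∀ t, cos (h t) = 0 → ∃ d, d < 0 ∧ HasDerivAt h d t) (B : ℝ) :
    ∀ n : ℕ, ∀ A, A ≤ B → ({t ∈ Ico A B | cos (h t) = 0}).ncard = n →
      bnd (h B) = bnd (h A) - n := by
  intro n
  induction n with
  | zero =>
    intro A hAB hcard
    have hfin := crossing_finite hc hd A B
    have hempty : {t ∈ Ico A B | cos (h t) = 0} = ∅ := (Set.ncard_eq_zero hfin).1 hcard
    have hno : ∀ t ∈ Ico A B, cos (h t) ≠ 0 := by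
      intro t ht hz
      have : t ∈ {t ∈ Ico A B | cos (h t) = 0} := ⟨ht, hz⟩
      rw [hempty] at this
      exact this
    simpa using (bandConstIco hc hd hAB hno).symm
  | succ n ih =>
    intro A hAB hcard
    have hfin := crossing_finite hc hd A B
    set S := {t ∈ Ico A B | cos (h t) = 0} with hS
    have hne : S.Nonempty := by
      rw [Set.nonempty_iff_ne_empty]
      intro he
      rw [he, Set.ncard_empty] at hcard
      omega
    obtain ⟨t₀, ht₀S, ht₀min⟩ := S.exists_min_image id hfin hne
    have ht₀Ico : t₀ ∈ Ico A B := ht₀S.1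
    have ht₀z : cos (h t₀) = 0 := ht₀S.2
    obtain ⟨d, hdneg, hder⟩ := hd t₀ ht₀z
    obtain ⟨δ, hδ, hright, _⟩ := crossing_local hc hder hdneg
    set S' := S \ {t₀} with hS'
    have hS'fin : S'.Finite := hfin.diff
    have hS'card : S'.ncard = n := by
      rw [hS', Set.ncard_diff_singleton_of_mem ht₀S, hcard]
      omega
    have hS'gt : ∀ s ∈ S', t₀ < s := by
      intro s hs
      exact lt_of_le_of_ne (ht₀min s hs.1) (fun he => hs.2 he.symm)
    obtain ⟨t₁, ht₁gt, ht₁le, ht₁lb⟩ :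
        ∃ t₁, t₀ < t₁ ∧ t₁ ≤ B ∧ ∀ s ∈ S', t₁ ≤ s := by
      rcases Set.eq_empty_or_nonempty S' with he | hne'
      · exact ⟨B, ht₀Ico.2, le_rfl, by simp [he]⟩
      · obtain ⟨t₁, ht₁S', ht₁min⟩ := S'.exists_min_image id hS'fin hne'
        exact ⟨t₁, hS'gt t₁ ht₁S', ht₁S'.1.1.2.le, ht₁min⟩
    set A' := (t₀ + min t₁ (t₀ + δ))/2 with hA'
    have hmin_gt : t₀ < min t₁ (t₀ + δ) := lt_min ht₁gt (by linarith)
    have hA'gt : t₀ < A' := by rw [hA']; linarith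
    have hA'lt_t₁ : A' < t₁ := by
      have := min_le_left t₁ (t₀ + δ); rw [hA']; linarith
    have hA'lt_δ : A' < t₀ + δ := by
      have := min_le_right t₁ (t₀ + δ); rw [hA']; linarith
    have hA'le_B : A' ≤ B := le_of_lt (lt_of_lt_of_le hA'lt_t₁ ht₁le)
    have hSA' : {t ∈ Ico A' B | cos (h t) = 0} = S' := by
      ext s
      constructor
      · rintro ⟨⟨hs1, hs2⟩, hs3⟩
        refine ⟨⟨⟨le_trans ht₀Ico.1 (le_trans hA'gt.le hs1), hs2⟩, hs3⟩, ?_⟩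
        intro he
        rw [Set.mem_singleton_iff] at he
        subst he
        linarith
      · intro hs
        exact ⟨⟨le_trans (le_of_lt hA'lt_t₁) (ht₁lb s hs), hs.1.1.2⟩, hs.1.2⟩
    have hIH : bnd (h B) = bnd (h A') - n := by
      apply ih A' hA'le_B
      rw [hSA', hS'card]
    have h1 : bnd (h A) = bnd (h t₀) := by
      apply bandConstIco hc hd ht₀Ico.1
      intro t ht hz
      have htS : t ∈ S := ⟨⟨ht.1, lt_trans ht.2 ht₀Ico.2⟩, hz⟩
      exact absurd (ht₀min t htS) (not_le.2 ht.2)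
    obtain ⟨k, hk⟩ := cosZero.1 ht₀z
    have hhA' := hright A' hA'gt hA'lt_δ
    have h2 : bnd (h A') = k - 1 := by
      have e1 : π/2 + ((k:ℝ) - 1)*π = h t₀ - π := by rw [hk]; ring
      have e2 : π/2 + (((k:ℝ) - 1) + 1)*π = h t₀ := by rw [hk]; ring
      refine bnd_eq ?_ ?_
      · push_cast; linarith [hhA'.1]
      · push_cast; linarith [hhA'.2]
    have h3 : bnd (h t₀) = k := by rw [hk]; exact bnd_lvl
    rw [hIH, h2, h1, h3]
    push_cast
    ring

/-- full counting result -/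
private lemma countFull {h : ℝ → ℝ} (hc : Continuous h)
    (hd : ∀ t, cos (h t) = 0 → ∃ d, d < 0 ∧ HasDerivAt h d t)
    {A B : ℝ} (hAB : A ≤ B) {m : ℤ} (hper : h B - h A = m * (2*π)) :
    h B - h A = -π * ({t ∈ Ico A B | cos (h t) = 0}).ncard := by
  set N := ({t ∈ Ico A B | cos (h t) = 0}).ncard with hN
  have hb := countBnd hc hd B N A hAB rfl
  have hshift : bnd (h B) = bnd (h A) + 2 * m := by
    have he : (h B - π/2)/π = (h A - π/2)/π + (2*m : ℤ) := by
      push_cast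
      field_simp
      linarith [hper, pi_pos]
    unfold bnd
    rw [he, Int.floor_add_intCast]
  have hint : 2 * m = -(N : ℤ) := by omega
  have hR : (m : ℝ) * (2 * π) = -π * N := by
    have hc2 : ((2 * m : ℤ) : ℝ) = ((-(N:ℤ) : ℤ) : ℝ) := by rw [hint]
    push_cast at hc2
    have := congrArg (fun x : ℝ => x * π) hc2
    linarith [this]
  linarith [hper, hR]

/-! ### Cross product identities -/

private lemma inner3 (x y : EuclideanSpace ℝ (Fin 3)) :
    (inner ℝ x y : ℝ) = x 0 * y 0 + x 1 * y 1 + x 2 * y 2 := by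
  simp [PiLp.inner_apply, Fin.sum_univ_three, RCLike.inner_apply, mul_comm]

private lemma cross3_apply (a b : EuclideanSpace ℝ (Fin 3)) :
    cross3 a b 0 = a 1 * b 2 - a 2 * b 1 ∧
    cross3 a b 1 = a 2 * b 0 - a 0 * b 2 ∧
    cross3 a b 2 = a 0 * b 1 - a 1 * b 0 := by
  refine ⟨?_, ?_, ?_⟩ <;> simp [cross3, crossProduct, EuclideanSpace.equiv]

private lemma cross3_inner_left (a b : EuclideanSpace ℝ (Fin 3)) :
    (inner ℝ (cross3 a b) a : ℝ) = 0 := by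
  obtain ⟨h0, h1, h2⟩ := cross3_apply a b
  rw [inner3, h0, h1, h2]; ring

private lemma cross3_lagrange (a b c d : EuclideanSpace ℝ (Fin 3)) :
    (inner ℝ (cross3 a b) (cross3 c d) : ℝ)
      = (inner ℝ a c : ℝ) * (inner ℝ b d : ℝ) - (inner ℝ a d : ℝ) * (inner ℝ b c : ℝ) := by
  obtain ⟨h0, h1, h2⟩ := cross3_apply a b
  obtain ⟨g0, g1, g2⟩ := cross3_apply c d
  rw [inner3, inner3, inner3, inner3, inner3, h0, h1, h2, g0, g1, g2]; ring

private lemma cross3_triple_swap (x y z : EuclideanSpace ℝ (Fin 3)) :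
    (inner ℝ x (cross3 y z) : ℝ) = -(inner ℝ y (cross3 x z) : ℝ) := by
  obtain ⟨h0, h1, h2⟩ := cross3_apply y z
  obtain ⟨g0, g1, g2⟩ := cross3_apply x z
  rw [inner3, inner3, h0, h1, h2, g0, g1, g2]; ring

/-- cross product with a fixed left argument, as a continuous linear map -/
private def crossCLM (a : EuclideanSpace ℝ (Fin 3)) :
    EuclideanSpace ℝ (Fin 3) →L[ℝ] EuclideanSpace ℝ (Fin 3) :=
  LinearMap.toContinuousLinearMap <|
    ((EuclideanSpace.equiv (Fin 3) ℝ).symm.toLinearEquiv.toLinearMap.comp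
      (crossProduct ((EuclideanSpace.equiv (Fin 3) ℝ) a))).comp
      (EuclideanSpace.equiv (Fin 3) ℝ).toLinearEquiv.toLinearMap

private lemma crossCLM_apply (a b : EuclideanSpace ℝ (Fin 3)) : crossCLM a b = cross3 a b := rfl

private lemma periodic_deriv' {f : ℝ → EuclideanSpace ℝ (Fin 3)} {c : ℝ}
    (hf : Function.Periodic f c) : Function.Periodic (deriv f) c := by
  intro x
  have : (fun y => f (y + c)) = f := funext hf
  rw [← deriv_comp_add_const, this]

/-- The rotation formula `Rot(u⊥, n) = −½·#{⟨u,n⟩ = 0}·sign(τ_g)`: the zero set `Z` of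
`⟨u, n⟩` on `[0, 2π)` is finite and `θ(2π) − θ(0) = −ε·π·#Z`. -/
theorem stmt8
    (Γ n : ℝ → EuclideanSpace ℝ (Fin 3)) (κg τg : ℝ → ℝ)
    (hΓ : ContDiff ℝ 2 Γ) (hΓper : Function.Periodic Γ (2 * π))
    (hT1 : ∀ t, ‖deriv Γ t‖ = 1)
    (hn : ContDiff ℝ 1 n) (hnper : Function.Periodic n (2 * π))
    (hn1 : ∀ t, ‖n t‖ = 1)
    (hnT : ∀ t, (inner ℝ (n t) (deriv Γ t) : ℝ) = 0)
    (hκcont : Continuous κg) (hκper : Function.Periodic κg (2 * π))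
    (hτcont : Continuous τg) (hτper : Function.Periodic τg (2 * π))
    (hτ : ∀ t, τg t ≠ 0)
    (hDarboux1 : ∀ t, deriv (deriv Γ) t = κg t • cross3 (n t) (deriv Γ t))
    (hDarboux2 : ∀ t, deriv (fun s => cross3 (n s) (deriv Γ s)) t
      = -κg t • deriv Γ t + τg t • n t)
    (hDarboux3 : ∀ t, deriv n t = -τg t • cross3 (n t) (deriv Γ t))
    (u : EuclideanSpace ℝ (Fin 3)) (hu : ‖u‖ = 1)
    (huT : ∀ t, cross3 u (deriv Γ t) ≠ 0)
    (θ : ℝ → ℝ) (hθ : ContDiff ℝ 1 θ)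
    (hθframe : ∀ t, ‖cross3 u (deriv Γ t)‖⁻¹ • cross3 u (deriv Γ t)
      = cos (θ t) • cross3 (n t) (deriv Γ t) + sin (θ t) • n t)
    (ε : ℝ)
    (hε : ((∀ t, 0 < τg t) ∧ ε = 1) ∨ ((∀ t, τg t < 0) ∧ ε = -1)) :
    ({t ∈ Set.Ico (0 : ℝ) (2 * π) | (inner ℝ u (n t) : ℝ) = 0}).Finite ∧
    θ (2 * π) - θ 0
      = -ε * π * ({t ∈ Set.Ico (0 : ℝ) (2 * π) | (inner ℝ u (n t) : ℝ) = 0}).ncard := by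
  -- abbreviations (as plain functions)
  have hrpos : ∀ t, (0:ℝ) < ‖cross3 u (deriv Γ t)‖ := fun t => norm_pos_iff.2 (huT t)
  have hnd : Differentiable ℝ n := hn.differentiable (by norm_num)
  have hθd : Differentiable ℝ θ := hθ.differentiable (by norm_num)
  have hTc : ContDiff ℝ 1 (deriv Γ) := by
    have h2 : ContDiff ℝ ((1:ℕ) + 1 : ℕ) Γ := by exact_mod_cast hΓ
    exact (contDiff_succ_iff_deriv.1 (by exact_mod_cast h2)).2.2
  have hTd : Differentiable ℝ (deriv Γ) := hTc.differentiable (by norm_num)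
  -- unit norms as inner products
  have hnn : ∀ t, (inner ℝ (n t) (n t) : ℝ) = 1 := by
    intro t
    rw [real_inner_self_eq_norm_sq, hn1]
    norm_num
  have hTT : ∀ t, (inner ℝ (deriv Γ t) (deriv Γ t) : ℝ) = 1 := by
    intro t
    rw [real_inner_self_eq_norm_sq, hT1]
    norm_num
  -- ⟪P t, P t⟫ = 1
  have hPP : ∀ t, (inner ℝ (cross3 (n t) (deriv Γ t)) (cross3 (n t) (deriv Γ t)) : ℝ) = 1 := by
    intro t
    rw [cross3_lagrange, hnn, hTT, hnT]
    have : (inner ℝ (deriv Γ t) (n t) : ℝ) = 0 := by rw [real_inner_comm]; exact hnT t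
    rw [this]
    ring
  -- the two frame identities
  have cosid : ∀ t, cos (θ t) * ‖cross3 u (deriv Γ t)‖ = (inner ℝ u (n t) : ℝ) := by
    intro t
    have h := congrArg
      (fun v : EuclideanSpace ℝ (Fin 3) => (inner ℝ (cross3 (n t) (deriv Γ t)) v : ℝ))
      (hθframe t)
    simp only [inner_add_right, real_inner_smul_right] at h
    rw [hPP t, cross3_inner_left, cross3_lagrange, hnT, hTT] at h
    have hcomm : (inner ℝ (n t) u : ℝ) = (inner ℝ u (n t) : ℝ) := real_inner_comm _ _
    rw [hcomm] at h
    have hr := (hrpos t).ne'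
    have h2 : cos (θ t) = ‖cross3 u (deriv Γ t)‖⁻¹ * (inner ℝ u (n t) : ℝ) := by
      linarith [h]
    rw [h2]
    field_simp
  have sinid : ∀ t, sin (θ t) * ‖cross3 u (deriv Γ t)‖
      = -(inner ℝ u (cross3 (n t) (deriv Γ t)) : ℝ) := by
    intro t
    have h := congrArg
      (fun v : EuclideanSpace ℝ (Fin 3) => (inner ℝ (n t) v : ℝ))
      (hθframe t)
    simp only [inner_add_right, real_inner_smul_right] at h
    have hPn : (inner ℝ (n t) (cross3 (n t) (deriv Γ t)) : ℝ) = 0 := by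
      rw [real_inner_comm]; exact cross3_inner_left _ _
    rw [hPn, hnn t, cross3_triple_swap] at h
    have hr := (hrpos t).ne'
    have h2 : sin (θ t) = ‖cross3 u (deriv Γ t)‖⁻¹ * (-(inner ℝ u (cross3 (n t) (deriv Γ t)) : ℝ)) := by
      linarith [h]
    rw [h2]
    field_simp
  -- Pythagoras
  have pyth : ∀ t, (inner ℝ u (cross3 (n t) (deriv Γ t)) : ℝ)^2 + (inner ℝ u (n t) : ℝ)^2
      = ‖cross3 u (deriv Γ t)‖^2 := by
    intro t
    have hsc := sin_sq_add_cos_sq (θ t)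
    have e1 : (inner ℝ u (n t) : ℝ)^2 = cos (θ t)^2 * ‖cross3 u (deriv Γ t)‖^2 := by
      rw [← cosid t]; ring
    have ea : (inner ℝ u (cross3 (n t) (deriv Γ t)) : ℝ)
        = -(sin (θ t) * ‖cross3 u (deriv Γ t)‖) := by linarith [sinid t]
    have e2 : (inner ℝ u (cross3 (n t) (deriv Γ t)) : ℝ)^2
        = sin (θ t)^2 * ‖cross3 u (deriv Γ t)‖^2 := by rw [ea]; ring
    calc (inner ℝ u (cross3 (n t) (deriv Γ t)) : ℝ)^2 + (inner ℝ u (n t) : ℝ)^2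
        = (sin (θ t)^2 + cos (θ t)^2) * ‖cross3 u (deriv Γ t)‖^2 := by rw [e1, e2]; ring
      _ = ‖cross3 u (deriv Γ t)‖^2 := by rw [hsc]; ring
  -- derivative of b
  have bderiv : ∀ t, HasDerivAt (fun s => (inner ℝ u (n s) : ℝ))
      (-τg t * (inner ℝ u (cross3 (n t) (deriv Γ t)) : ℝ)) t := by
    intro t
    have h1 : HasDerivAt n (deriv n t) t := (hnd t).hasDerivAt
    have h2 := HasDerivAt.inner ℝ (hasDerivAt_const t u) h1
    simp only [inner_zero_left, add_zero] at h2
    rw [hDarboux3 t] at h2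
    have h3 : (inner ℝ u (-τg t • cross3 (n t) (deriv Γ t)) : ℝ)
        = -τg t * (inner ℝ u (cross3 (n t) (deriv Γ t)) : ℝ) := real_inner_smul_right _ _ _
    rw [h3] at h2
    exact h2
  -- key derivative computation at crossings
  have hkey : ∀ t₀, cos (θ t₀) = 0 → deriv θ t₀ = -τg t₀ := by
    intro t₀ h0
    have hb0 : (inner ℝ u (n t₀) : ℝ) = 0 := by rw [← cosid t₀, h0]; ring
    have ha0 : (inner ℝ u (cross3 (n t₀) (deriv Γ t₀)) : ℝ) ≠ 0 := by
      intro h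
      have hp := pyth t₀
      rw [h, hb0] at hp
      nlinarith [hrpos t₀]
    have hθder : HasDerivAt θ (deriv θ t₀) t₀ := (hθd t₀).hasDerivAt
    have hcos : HasDerivAt (fun t => cos (θ t)) (-sin (θ t₀) * deriv θ t₀) t₀ := by
      simpa [mul_comm, Function.comp_def] using (Real.hasDerivAt_cos (θ t₀)).comp t₀ hθder
    have hcd : DifferentiableAt ℝ (fun s => cross3 u (deriv Γ s)) t₀ := by
      have := ((crossCLM u).differentiable.differentiableAt (x := deriv Γ t₀)).comp t₀
        (hTd t₀)
      simpa [Function.comp_def, crossCLM_apply] using this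
    have hrd : DifferentiableAt ℝ (fun s => ‖cross3 u (deriv Γ s)‖) t₀ :=
      DifferentiableAt.norm ℝ hcd (huT t₀)
    have hprod : HasDerivAt (fun t => cos (θ t) * ‖cross3 u (deriv Γ t)‖)
        ((-sin (θ t₀) * deriv θ t₀) * ‖cross3 u (deriv Γ t₀)‖
          + cos (θ t₀) * deriv (fun s => ‖cross3 u (deriv Γ s)‖) t₀) t₀ :=
      hcos.mul hrd.hasDerivAt
    have hfe : (fun t => cos (θ t) * ‖cross3 u (deriv Γ t)‖)
        = fun s => (inner ℝ u (n s) : ℝ) := funext cosid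
    rw [hfe] at hprod
    have huniq := hprod.unique (bderiv t₀)
    rw [h0] at huniq
    have hsin := sinid t₀
    have h5 : (inner ℝ u (cross3 (n t₀) (deriv Γ t₀)) : ℝ) * deriv θ t₀
        = -τg t₀ * (inner ℝ u (cross3 (n t₀) (deriv Γ t₀)) : ℝ) := by
      linear_combination huniq + (deriv θ t₀) * hsin
    have h6 : (inner ℝ u (cross3 (n t₀) (deriv Γ t₀)) : ℝ) * deriv θ t₀
        = (inner ℝ u (cross3 (n t₀) (deriv Γ t₀)) : ℝ) * (-τg t₀) := by
      rw [h5]; ring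
    exact mul_left_cancel₀ ha0 h6
  -- periodicity of the trigonometric data
  have hT2π : deriv Γ (2*π) = deriv Γ 0 := by
    have := periodic_deriv' hΓper 0
    simpa using this
  have hn2π : n (2*π) = n 0 := by simpa using hnper 0
  have hcosper : cos (θ (2*π)) = cos (θ 0) := by
    have h1 := cosid (2*π)
    have h2 := cosid 0
    rw [hT2π, hn2π] at h1
    have := (hrpos 0).ne'
    field_simp at h1 h2 ⊢
    nlinarith [h1, h2, hrpos 0]
  have hsinper : sin (θ (2*π)) = sin (θ 0) := by
    have h1 := sinid (2*π)
    have h2 := sinid 0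
    rw [hT2π, hn2π] at h1
    have := (hrpos 0).ne'
    nlinarith [h1, h2, hrpos 0]
  have hm : ∃ m : ℤ, θ (2*π) - θ 0 = m * (2*π) := by
    have h1 : cos (θ (2*π) - θ 0) = 1 := by
      rw [Real.cos_sub, hcosper, hsinper]
      nlinarith [sin_sq_add_cos_sq (θ 0)]
    obtain ⟨m, hm⟩ := (Real.cos_eq_one_iff _).1 h1
    exact ⟨m, hm.symm⟩
  obtain ⟨m, hm⟩ := hm
  -- the zero set expressed through cos θ
  have hZ : {t ∈ Set.Ico (0:ℝ) (2*π) | (inner ℝ u (n t) : ℝ) = 0}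
      = {t ∈ Set.Ico (0:ℝ) (2*π) | cos (θ t) = 0} := by
    ext t
    simp only [Set.mem_setOf_eq, and_congr_right_iff]
    intro _
    constructor
    · intro hbz
      have := cosid t
      rw [hbz] at this
      exact mul_right_cancel₀ (hrpos t).ne' (by rw [this]; ring)
    · intro hcz
      rw [← cosid t, hcz, zero_mul]
  rw [hZ]
  rcases hε with ⟨hpos, hε1⟩ | ⟨hneg, hε1⟩ <;> subst hε1
  · -- τ > 0, ε = 1 : apply to θ
    have hd : ∀ t, cos (θ t) = 0 → ∃ d, d < 0 ∧ HasDerivAt θ d t := by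
      intro t h0
      exact ⟨deriv θ t, by rw [hkey t h0]; linarith [hpos t], (hθd t).hasDerivAt⟩
    refine ⟨crossing_finite hθ.continuous hd 0 (2*π), ?_⟩
    have hcount := countFull hθ.continuous hd
      (by positivity : (0:ℝ) ≤ 2*π) (m := m) hm
    rw [hcount]
    ring
  · -- τ < 0, ε = -1 : apply to -θ
    have hd : ∀ t, cos ((-θ) t) = 0 → ∃ d, d < 0 ∧ HasDerivAt (-θ) d t := by
      intro t h0
      rw [Pi.neg_apply, Real.cos_neg] at h0
      refine ⟨τg t, hneg t, ?_⟩
      have := ((hθd t).hasDerivAt).neg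
      rw [hkey t h0] at this
      simpa using this
    have hmn : (-θ) (2*π) - (-θ) 0 = (-m : ℤ) * (2*π) := by
      push_cast
      simp only [Pi.neg_apply]
      linarith [hm]
    have hcθ : Continuous (-θ) := hθ.continuous.neg
    have hfin := crossing_finite hcθ hd 0 (2*π)
    have hcount := countFull hcθ hd (by positivity : (0:ℝ) ≤ 2*π) (m := -m) hmn
    have hset : {t ∈ Set.Ico (0:ℝ) (2*π) | cos ((-θ) t) = 0}
        = {t ∈ Set.Ico (0:ℝ) (2*π) | cos (θ t) = 0} := by
      ext t
      simp [Real.cos_neg]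
    rw [hset] at hfin hcount
    refine ⟨hfin, ?_⟩
    simp only [Pi.neg_apply] at hcount
    have : θ (2*π) - θ 0 = π * ({t ∈ Set.Ico (0:ℝ) (2*π) | cos (θ t) = 0}).ncard := by
      linarith [hcount]
    rw [this]
    ring
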